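/- Let χ: ℝⁿ → ℝ be a function satisfying (K1) (χ ∈ L¹(ℝⁿ) and bounded near the origin) and (K3) (there is β > 0 with m_{β,Πⁿ}(χ) < +∞) with respect to the node sequence Πⁿ. Then the absolute moment of order zero is finite, i.e. m_{0,Πⁿ}(χ) := sup_{u∈ℝⁿ} Σ_{k∈ℤⁿ} |χ(u − t_k)| < +∞. -/

import Mathlib

open MeasureTheory Filter

noncomputable section

/-- The multivariate nodes `t_k = (t_{k_1}, …, t_{k_n})` built from a one-dimensional
node sequence `t : ℤ → ℝ`. -/
def nodes {n : ℕ} (t : ℤ → ℝ) (k : Fin n → ℤ) : EuclideanSpace ℝ (Fin n) :=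
  WithLp.toLp 2 (fun i => t (k i))

/-- The plurirectangle `R_k^w = ∏_i [t_{k_i}/w, t_{k_i+1}/w]`. -/
def cell {n : ℕ} (t : ℤ → ℝ) (w : ℝ) (k : Fin n → ℤ) : Set (EuclideanSpace ℝ (Fin n)) :=
  (WithLp.ofLp : EuclideanSpace ℝ (Fin n) → (Fin n → ℝ)) ⁻¹' Set.univ.pi fun i => Set.Icc (t (k i) / w) (t (k i + 1) / w)

/-- The multivariate sampling Kantorovich operator
`(S_w^χ f)(x) = ∑_k χ(wx − t_k) · (wⁿ/A_k) ∫_{R_k^w} f`. -/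
def SK {n : ℕ} (t : ℤ → ℝ) (χ : EuclideanSpace ℝ (Fin n) → ℝ) (w : ℝ)
    (f : EuclideanSpace ℝ (Fin n) → ℝ) (x : EuclideanSpace ℝ (Fin n)) : ℝ :=
  ∑' k : Fin n → ℤ,
    χ (w • x - nodes t k) *
      ((w ^ n / ∏ i, (t (k i + 1) - t (k i))) * ∫ u in cell t w k, f u)

/-- The node sequence `Π = (t_k)` is strictly increasing, diverges at `±∞`, and has gaps
between `δ` and `Δ`. -/
structure IsNodeSeq (t : ℤ → ℝ) (δ Δ : ℝ) : Prop where
  strictMono : StrictMono t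
  tendsto_atTop : Tendsto t atTop atTop
  tendsto_atBot : Tendsto t atBot atBot
  delta_pos : 0 < δ
  Delta_pos : 0 < Δ
  gap_lower : ∀ k : ℤ, δ ≤ t (k + 1) - t k
  gap_upper : ∀ k : ℤ, t (k + 1) - t k ≤ Δ

/-- The kernel conditions (K1)–(K3) for `χ : ℝⁿ → ℝ` with respect to the nodes `Πⁿ`. -/
structure IsKernel {n : ℕ} (t : ℤ → ℝ) (χ : EuclideanSpace ℝ (Fin n) → ℝ) : Prop where
  /-- (K1): `χ ∈ L¹(ℝⁿ)`. -/
  integrable : Integrable χ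
  /-- (K1): `χ` is bounded in a neighbourhood of the origin. -/
  bounded_near_zero : ∃ ε > (0 : ℝ), ∃ M : ℝ,
    ∀ x : EuclideanSpace ℝ (Fin n), ‖x‖ < ε → |χ x| ≤ M
  /-- (K2): `∑_k χ(u − t_k) = 1` for every `u`. -/
  partition_of_unity : ∀ u : EuclideanSpace ℝ (Fin n),
    ∑' k : Fin n → ℤ, χ (u - nodes t k) = 1
  /-- (K3): the absolute discrete moment of some order `β > 0` is finite. -/
  moment : ∃ β > (0 : ℝ),
    (∀ u : EuclideanSpace ℝ (Fin n),
        Summable fun k : Fin n → ℤ => |χ (u - nodes t k)| * ‖u - nodes t k‖ ^ β) ∧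
      ∃ M : ℝ, ∀ u : EuclideanSpace ℝ (Fin n),
        (∑' k : Fin n → ℤ, |χ (u - nodes t k)| * ‖u - nodes t k‖ ^ β) ≤ M

/-- If `χ` satisfies (K1) and (K3), then the absolute moment of order zero is finite:
`m_{0,Πⁿ}(χ) = sup_{u∈ℝⁿ} ∑_{k∈ℤⁿ} |χ(u − t_k)| < +∞`. -/
theorem moment_zero_finite {n : ℕ} (t : ℤ → ℝ) (δ Δ : ℝ) (ht : IsNodeSeq t δ Δ)
    (χ : EuclideanSpace ℝ (Fin n) → ℝ)
    (hK1_int : Integrable χ)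
    (hK1_bdd : ∃ ε > (0 : ℝ), ∃ M : ℝ,
      ∀ x : EuclideanSpace ℝ (Fin n), ‖x‖ < ε → |χ x| ≤ M)
    (hK3 : ∃ β > (0 : ℝ),
      (∀ u : EuclideanSpace ℝ (Fin n),
          Summable fun k : Fin n → ℤ => |χ (u - nodes t k)| * ‖u - nodes t k‖ ^ β) ∧
        ∃ M : ℝ, ∀ u : EuclideanSpace ℝ (Fin n),
          (∑' k : Fin n → ℤ, |χ (u - nodes t k)| * ‖u - nodes t k‖ ^ β) ≤ M) :
    (∀ u : EuclideanSpace ℝ (Fin n),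
        Summable fun k : Fin n → ℤ => |χ (u - nodes t k)|) ∧
      ∃ M : ℝ, ∀ u : EuclideanSpace ℝ (Fin n),
        (∑' k : Fin n → ℤ, |χ (u - nodes t k)|) ≤ M := by
  obtain ⟨ε, hε, M0, hM0⟩ := hK1_bdd
  obtain ⟨β, hβ, hsumβ, Mβ, hMβ⟩ := hK3
  set M0' : ℝ := max M0 0 with hM0'def
  have hM0'nn : (0 : ℝ) ≤ M0' := le_max_right _ _
  have hM0' : ∀ x : EuclideanSpace ℝ (Fin n), ‖x‖ < ε → |χ x| ≤ M0' :=
    fun x hx => (hM0 x hx).trans (le_max_left _ _)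
  have hδ := ht.delta_pos
  obtain ⟨N, hN1, hN0⟩ : ∃ N : ℤ, 2 * ε / δ ≤ N ∧ 0 ≤ N :=
    ⟨⌈2 * ε / δ⌉, Int.le_ceil _, by positivity⟩
  have hεβpos : (0 : ℝ) < ε ^ β := Real.rpow_pos_of_pos hε β
  -- coordinate bound in Euclidean space
  have coord : ∀ (x : EuclideanSpace ℝ (Fin n)) (i : Fin n), |x i| ≤ ‖x‖ := by
    intro x i
    rw [EuclideanSpace.norm_eq,
      show |x i| = Real.sqrt (|x i| ^ 2) by rw [Real.sqrt_sq (abs_nonneg _)]]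
    apply Real.sqrt_le_sqrt
    simpa [Real.norm_eq_abs] using
      Finset.single_le_sum (f := fun j => ‖x j‖ ^ 2) (fun j _ => sq_nonneg _) (Finset.mem_univ i)
  -- growth of the node sequence
  have gap : ∀ (k : ℤ) (m : ℕ), (m : ℝ) * δ ≤ t (k + m) - t k := by
    intro k m
    induction m with
    | zero => simp
    | succ m ih =>
        have h1 := ht.gap_lower (k + m)
        have : t (k + (m + 1 : ℕ)) - t k = (t (k + m + 1) - t (k + m)) + (t (k + m) - t k) := by
          push_cast; ring_nf
        rw [this]
        push_cast
        nlinarith [ih, h1]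
  -- two nodes close to the same point have close indices
  have key : ∀ (x : ℝ) (k k' : ℤ), |x - t k| < ε → |x - t k'| < ε → k' ≤ k + N := by
    intro x k k' hk hk'
    by_contra hcon
    push_neg at hcon
    have hkk' : k ≤ k' := by omega
    have hmn : k' = k + ((k' - k).toNat : ℤ) := by omega
    have h1 : ((k' - k).toNat : ℝ) * δ ≤ t k' - t k := by
      have := gap k (k' - k).toNat
      rwa [← hmn] at this
    have h2 : t k' - t k < 2 * ε := by
      cases abs_lt.1 hk; cases abs_lt.1 hk'; linarith
    have h3 : ((k' - k).toNat : ℝ) < 2 * ε / δ := by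
      rw [lt_div_iff₀ hδ]; linarith
    have h4 : (2 * ε / δ) ≤ (N : ℝ) := by exact_mod_cast hN1
    have h5 : ((k' - k).toNat : ℤ) < N := by exact_mod_cast h3.trans_le h4
    omega
  -- main per-point estimate
  set C : ℕ := ((2 * N + 1).toNat) ^ n with hCdef
  set M : ℝ := (C : ℝ) * M0' + (ε ^ β)⁻¹ * Mβ with hMdef
  have main : ∀ u : EuclideanSpace ℝ (Fin n),
      Summable (fun k : Fin n → ℤ => |χ (u - nodes t k)|) ∧
        (∑' k : Fin n → ℤ, |χ (u - nodes t k)|) ≤ M := by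
    intro u
    set f : (Fin n → ℤ) → ℝ := fun k => |χ (u - nodes t k)| with hfdef
    set g : (Fin n → ℤ) → ℝ := fun k => (ε ^ β)⁻¹ * (f k * ‖u - nodes t k‖ ^ β) with hgdef
    have hgsum : Summable g := (hsumβ u).mul_left _
    have hgtsum : (∑' k, g k) ≤ (ε ^ β)⁻¹ * Mβ := by
      rw [hgdef, tsum_mul_left]
      exact mul_le_mul_of_nonneg_left (hMβ u) (by positivity)
    have hfar : ∀ k : Fin n → ℤ, ε ≤ ‖u - nodes t k‖ → f k ≤ g k := by
      intro k hk
      have h1 : ε ^ β ≤ ‖u - nodes t k‖ ^ β := Real.rpow_le_rpow hε.le hk hβ.le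
      have h2 : (1 : ℝ) ≤ (ε ^ β)⁻¹ * ‖u - nodes t k‖ ^ β := by
        rw [← inv_mul_cancel₀ (ne_of_gt hεβpos)]
        exact mul_le_mul_of_nonneg_left h1 (by positivity)
      calc f k = f k * 1 := (mul_one _).symm
        _ ≤ f k * ((ε ^ β)⁻¹ * ‖u - nodes t k‖ ^ β) :=
            mul_le_mul_of_nonneg_left h2 (abs_nonneg _)
        _ = g k := by rw [hgdef]; ring
    set S : Set (Fin n → ℤ) := {k | ‖u - nodes t k‖ < ε} with hSdef
    by_cases hS : S.Nonempty
    · obtain ⟨a, ha⟩ := hS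
      set T : Finset (Fin n → ℤ) := Finset.Icc (fun i => a i - N) (fun i => a i + N) with hTdef
      have hsub : ∀ k, k ∈ S → k ∈ T := by
        intro k hk
        rw [hTdef, Finset.mem_Icc]
        have hco : ∀ (m : Fin n → ℤ), m ∈ S → ∀ i, |u i - t (m i)| < ε := by
          intro m hm i
          have := lt_of_le_of_lt (coord (u - nodes t m) i) hm
          simpa [nodes] using this
        constructor <;> intro i
        · show a i - N ≤ k i
          have := key (u i) (k i) (a i) (hco k hk i) (hco a ha i)
          omega
        · show k i ≤ a i + N
          have := key (u i) (a i) (k i) (hco a ha i) (hco k hk i)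
          omega
      have hTcard : T.card = C := by
        rw [hTdef, Pi.card_Icc, hCdef]
        have : ∀ i : Fin n, (Finset.Icc (a i - N) (a i + N)).card = (2 * N + 1).toNat := by
          intro i; rw [Int.card_Icc]; ring_nf
        simp [this, Finset.prod_const]
      have hindzero : ∀ k ∉ T, S.indicator f k = 0 := by
        intro k hk
        apply Set.indicator_of_notMem
        exact fun hkS => hk (hsub k hkS)
      have hindsum : Summable (S.indicator f) := summable_of_ne_finset_zero hindzero
      have hle : ∀ k, f k ≤ S.indicator f k + g k := by
        intro k
        by_cases hk : k ∈ S
        · rw [Set.indicator_of_mem hk]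
          have : 0 ≤ g k := by
            rw [hgdef]; positivity
          linarith
        · rw [Set.indicator_of_notMem hk]
          have : ε ≤ ‖u - nodes t k‖ := le_of_not_gt hk
          simpa using hfar k this
      have hfsum : Summable f :=
        Summable.of_nonneg_of_le (fun k => abs_nonneg _) hle (hindsum.add hgsum)
      refine ⟨hfsum, ?_⟩
      have hindtsum : (∑' k, S.indicator f k) ≤ (C : ℝ) * M0' := by
        rw [tsum_eq_sum hindzero]
        calc ∑ k ∈ T, S.indicator f k ≤ ∑ k ∈ T, M0' := by
              apply Finset.sum_le_sum
              intro k _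
              by_cases hk : k ∈ S
              · rw [Set.indicator_of_mem hk]; exact hM0' _ hk
              · rw [Set.indicator_of_notMem hk]; exact hM0'nn
          _ = (T.card : ℝ) * M0' := by rw [Finset.sum_const, nsmul_eq_mul]
          _ = (C : ℝ) * M0' := by rw [hTcard]
      calc ∑' k, f k ≤ ∑' k, (S.indicator f k + g k) :=
            Summable.tsum_le_tsum hle hfsum (hindsum.add hgsum)
        _ = (∑' k, S.indicator f k) + ∑' k, g k := Summable.tsum_add hindsum hgsum
        _ ≤ (C : ℝ) * M0' + (ε ^ β)⁻¹ * Mβ := add_le_add hindtsum hgtsum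
        _ = M := rfl
    · have hall : ∀ k, ε ≤ ‖u - nodes t k‖ := by
        intro k
        by_contra hcon
        exact hS ⟨k, lt_of_not_ge hcon⟩
      have hle : ∀ k, f k ≤ g k := fun k => hfar k (hall k)
      have hfsum : Summable f :=
        Summable.of_nonneg_of_le (fun k => abs_nonneg _) hle hgsum
      refine ⟨hfsum, ?_⟩
      have h1 : (∑' k, f k) ≤ (ε ^ β)⁻¹ * Mβ :=
        (Summable.tsum_le_tsum hle hfsum hgsum).trans hgtsum
      have hC : (0 : ℝ) ≤ (C : ℝ) * M0' := by positivity
      rw [hMdef]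
      linarith
  exact ⟨fun u => (main u).1, M, fun u => (main u).2⟩
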